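/- arXiv:1607.07117 — 2 statements merged into one kernel-verified Lean document; each statement's English description precedes it below -/
import Mathlib

section
/- Under the identification of Y_n with matrix positions, the face maps on off-diagonal positions (for (a+1, a+b+2) with a+b+c = n-2) are: d_i(a+1,a+b+2) = (0,0) if (a=0,i=0) or (c=0,i=n); = (a, a+b+1) if a≠0 and i ≤ a; = (a+1,a+1) if b=0 and i=a+1; = (a+1, a+b+1) if b≠0 and a < i ≤ a+b+1; = (a+1, a+b+2) if c≠0 and i ≥ a+b+2. These formulas are equivalent to the geometric face maps d_i(^aΔ^b_c) given in the simplicial model of D². -/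
/-- The set `Y_n = {*_n} ∪ {I^a_b : a+b+1 = n} ∪ {^aΔ^b_c : a+b+c+2 = n}` of
`n`-simplices of the simplicial disk: `none` is the base point `*_n`,
`some (.inl ⟨(a,b),_⟩)` is `I^a_b` and `some (.inr ⟨(a,b,c),_⟩)` is `^aΔ^b_c`. -/
abbrev DiskSet (n : ℕ) : Type :=
  Option ({p : ℕ × ℕ // p.1 + p.2 + 1 = n} ⊕ {t : ℕ × ℕ × ℕ // t.1 + t.2.1 + t.2.2 + 2 = n})

/-- The face maps `d_i : Y_{n+1} → Y_n`, extending those of the simplicial circle by: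
`d_i(^aΔ^b_c) = *` if (`a = 0` and `i = 0`) or (`c = 0` and `i = n+1`);
`= ^{a-1}Δ^b_c` if `a ≠ 0` and `i ≤ a`; `= I^a_c` if `b = 0` and `i = a+1`;
`= ^aΔ^{b-1}_c` if `b ≠ 0` and `a < i ≤ a+b+1`; `= ^aΔ^b_{c-1}` if `c ≠ 0` and
`i ≥ a+b+2`. -/
def diskFace (n i : ℕ) : DiskSet (n + 1) → DiskSet n
  | none => none
  | some (.inl ⟨(a, b), h⟩) =>
      if i ≤ a then
        (if ha : a = 0 then none else some (.inl ⟨(a - 1, b), by omega⟩))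
      else
        (if hb : b = 0 then none else some (.inl ⟨(a, b - 1), by omega⟩))
  | some (.inr ⟨(a, b, c), h⟩) =>
      if i ≤ a then
        (if ha : a = 0 then none else some (.inr ⟨(a - 1, b, c), show a - 1 + b + c + 2 = n from by have h' : a + b + c + 2 = n + 1 := h; omega⟩))
      else if i ≤ a + b + 1 then
        (if hb : b = 0 then some (.inl ⟨(a, c), show a + c + 1 = n from by have h' : a + b + c + 2 = n + 1 := h; omega⟩)
         else some (.inr ⟨(a, b - 1, c), show a + (b - 1) + c + 2 = n from by have h' : a + b + c + 2 = n + 1 := h; omega⟩))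
      else
        (if hc : c = 0 then none else some (.inr ⟨(a, b, c - 1), show a + b + (c - 1) + 2 = n from by have h' : a + b + c + 2 = n + 1 := h; omega⟩))


/-- The identification of `Y_n` with the positions of an `n × n` upper-triangular
tensor matrix (together with `(0,0)` for the base point): `*_n ↦ (0,0)`,
`I^a_b ↦ (a+1,a+1)`, `^aΔ^b_c ↦ (a+1,a+b+2)`. -/
def toPos {n : ℕ} : DiskSet n → ℕ × ℕ
  | none => (0, 0)
  | some (.inl ⟨(a, _), _⟩) => (a + 1, a + 1)
  | some (.inr ⟨(a, b, _), _⟩) => (a + 1, a + b + 2)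

theorem toPos_diskFace_triangle (n i a b c : ℕ) (h : a + b + c + 2 = n + 1) :
    toPos (diskFace n i (some (.inr ⟨(a, b, c), h⟩))) =
      if i ≤ a then (if a = 0 then (0, 0) else (a, a + b + 1))
      else if i ≤ a + b + 1 then (if b = 0 then (a + 1, a + 1) else (a + 1, a + b + 1))
      else (if c = 0 then (0, 0) else (a + 1, a + b + 2)) := by
  simp only [diskFace]
  split_ifs <;> simp only [toPos, Prod.mk.injEq, true_and] <;> omega

/-- The matrix-position formulas for the face maps on
off-diagonal positions agree with (i.e. are equivalent to) the geometric face maps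
`d_i(^aΔ^b_c)` of the simplicial disk (the source is `Y_{n+1}`, so `n+1` plays the
role of `n` in the formulas). -/
theorem toPos_off_diagonal_faces (n i a b c : ℕ) (h : a + b + c + 2 = n + 1) :
    let y : DiskSet (n + 1) := some (.inr ⟨(a, b, c), h⟩)
    ((a = 0 ∧ i = 0) → toPos (diskFace n i y) = (0, 0)) ∧
    ((a ≠ 0 ∧ i ≤ a) → toPos (diskFace n i y) = (a, a + b + 1)) ∧
    ((b = 0 ∧ i = a + 1) → toPos (diskFace n i y) = (a + 1, a + 1)) ∧
    ((b ≠ 0 ∧ a < i ∧ i ≤ a + b + 1) → toPos (diskFace n i y) = (a + 1, a + b + 1)) ∧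
    ((c = 0 ∧ i = n + 1) → toPos (diskFace n i y) = (0, 0)) ∧
    ((c ≠ 0 ∧ a + b + 2 ≤ i) → toPos (diskFace n i y) = (a + 1, a + b + 2)) := by
  intro y
  simp only [y, toPos_diskFace_triangle]
  -- `h` is what places `i = n + 1` in the last region `a + b + 1 < i`.
  refine ⟨?_, ?_, ?_, ?_, ?_, ?_⟩ <;> rintro ⟨h₁, h₂⟩ <;> split_ifs <;> first | rfl | omega
end

section
/- The inclusion of simplicial pairs i : (S¹,S¹) → (S¹,D²) induces in each degree the map Hom_k(A^{⊗n}⊗B^{⊗n(n-1)/2}, M) → Hom_k(A^{⊗n}, M) sending f to (a_1⊗...⊗a_n) ↦ f(a_1⊗...⊗a_n⊗1⊗...⊗1) (all B-entries set to 1), and this is a chain map from the secondary Hochschild complex to the usual Hochschild complex. -/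
/-!
Cochain spaces are modelled by functions of the tensor-matrix entries; `A` and `B` are
commutative and `M` is a symmetric `A`-bimodule, so the right action coincides with
the left one.
-/

open scoped BigOperators

variable {k A B M : Type*} [Field k] [CommRing A] [Algebra k A] [CommRing B]
  [Algebra k B] [AddCommGroup M] [Module k M] [Module A M]

/-- Secondary cochains (tensor-matrix function model). -/
abbrev SecCochain (A B M : Type*) (n : ℕ) : Type _ :=
  (Fin n → A) → (Fin n → Fin n → B) → M

/-- Hochschild cochains (function model). -/
abbrev HCochain (A M : Type*) (n : ℕ) : Type _ := (Fin n → A) → M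

def pad {n : ℕ} (d : Fin n → A) : ℕ → A := fun j => if h : j < n then d ⟨j, h⟩ else 1

def padB {n : ℕ} (u : Fin n → Fin n → B) : ℕ → ℕ → B :=
  fun p q => if h : p < n ∧ q < n then u ⟨p, h.1⟩ ⟨q, h.2⟩ else 1

def expand (i m : ℕ) : ℕ := if m < i then m else m + 1

variable (ε : B →ₐ[k] A)

/-- The secondary Hochschild differential `δ^ε`. -/
def secDiff (n : ℕ) (f : SecCochain A B M n) : SecCochain A B M (n + 1) :=
  fun d u =>
    let D := pad d
    let U := padB u
    (d 0 * ε (∏ j ∈ Finset.Ioi (0 : Fin (n + 1)), u 0 j)) •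
        f (fun m => D ((m : ℕ) + 1)) (fun p q => U ((p : ℕ) + 1) ((q : ℕ) + 1))
      + ∑ i ∈ Finset.Icc 1 n, ((-1 : ℤ) ^ i) •
          f (fun m =>
              if (m : ℕ) = i - 1 then D (i - 1) * D i * ε (U (i - 1) i)
              else D (expand i (m : ℕ)))
            (fun p q =>
              if (p : ℕ) = i - 1 then U (i - 1) (expand i (q : ℕ)) * U i (expand i (q : ℕ))
              else if (q : ℕ) = i - 1 then U (expand i (p : ℕ)) (i - 1) * U (expand i (p : ℕ)) i
              else U (expand i (p : ℕ)) (expand i (q : ℕ)))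
      + ((-1 : ℤ) ^ (n + 1)) •
          ((d (Fin.last n) * ε (∏ j ∈ Finset.Iio (Fin.last n), u j (Fin.last n))) •
            f (fun m => D (m : ℕ)) (fun p q => U (p : ℕ) (q : ℕ)))

/-- The usual Hochschild differential (with symmetric coefficients). -/
def hochDiff (n : ℕ) (g : HCochain A M n) : HCochain A M (n + 1) := fun d =>
  let D := pad d
  d 0 • g (fun m => D ((m : ℕ) + 1))
    + ∑ i ∈ Finset.Icc 1 n, ((-1 : ℤ) ^ i) •
        g (fun m => if (m : ℕ) = i - 1 then D (i - 1) * D i else D (expand i (m : ℕ)))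
    + ((-1 : ℤ) ^ (n + 1)) • (d (Fin.last n) • g (fun m => D (m : ℕ)))

/-- The map induced by the inclusion `(S¹,S¹) → (S¹,D²)`: all `B`-entries are set
to `1`. -/
def Phi (n : ℕ) (f : SecCochain A B M n) : HCochain A M n := fun d => f d (fun _ _ => 1)

theorem padB_one {n : ℕ} : padB (fun _ _ : Fin n => (1 : B)) = fun _ _ => 1 := by
  funext p q
  simp [padB]

/-- Setting all `B`-entries equal to `1` is a chain map from the
secondary Hochschild complex of `(A,B,ε)` to the usual Hochschild complex of `A` with
coefficients in `M` (this is the map induced by the inclusion of simplicial pairs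
`(S¹,S¹) → (S¹,D²)`, whose map on cohomology is `Φ_n : H^n((A,B,ε);M) → HH^n(A,M)`). -/
theorem inclusion_induces_chain_map (n : ℕ) (f : SecCochain A B M n) :
    Phi (n + 1) (secDiff ε n f) = hochDiff n (Phi n f) := by
  funext d
  -- With every `B`-entry `1`, each `ε`-twist is `ε 1 = 1` and each merged row or column of
  -- the `B`-matrix is `1 * 1`, so the secondary faces become the Hochschild faces.
  simp only [Phi, secDiff, hochDiff, padB_one, Finset.prod_const_one, map_one, mul_one, ite_self]
end
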